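/- For the coupled linear system ẇ = −w − Lw − Lα, α̇ = Lw on ℝᵐ × ℝᵐ with L symmetric positive semidefinite, the function V = ½‖ẇ‖² + ½‖α̇‖² satisfies V̇ = −‖ẇ‖² − ẇᵀLẇ ≤ 0 along C² solutions. In particular ẇ(t) → 0 as t → ∞. -/

import Mathlib

/-
Differentiating the equations gives `ẅ = -ẇ - Lẇ - Lα̇` and `α̈ = Lẇ`, so
`V̇ = -‖ẇ‖² - ẇᵀLẇ`: the cross terms `∓ ẇᵀLα̇` cancel because `L` is symmetric.
Hence `V` is nonincreasing and bounded below, so it converges, and `‖ẇ‖² ≤ -V̇`.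
For `t ≥ 0` the state `(ẇ, α̇)` stays in the ball `V ≤ V(0)`, on which the derivative
of `‖ẇ‖²` is bounded below. This is Barbalat's argument: a value `‖ẇ(t)‖² ≥ ε` would
keep `‖ẇ‖² ≥ ε/2` on a window of fixed length `δ`, making `V` drop by `εδ/2` there,
which is impossible for large `t` since `V` converges.
-/

open Matrix Filter Topology

section Calculus

variable {𝕜 : Type*} [NontriviallyNormedField 𝕜] {m n : Type*} [Fintype n]
  {u v : 𝕜 → n → 𝕜} {u' v' : n → 𝕜} {t : 𝕜}

theorem HasDerivAt.dotProduct (hu : HasDerivAt u u' t) (hv : HasDerivAt v v' t) :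
    HasDerivAt (fun s => u s ⬝ᵥ v s) (u' ⬝ᵥ v t + u t ⬝ᵥ v') t := by
  have h := HasDerivAt.fun_sum (u := Finset.univ) fun i _ =>
    (hasDerivAt_pi.1 hu i).fun_mul (hasDerivAt_pi.1 hv i)
  rw [Finset.sum_add_distrib] at h
  exact h

theorem HasDerivAt.mulVec (A : Matrix m n 𝕜) (hu : HasDerivAt u u' t) :
    HasDerivAt (fun s => A *ᵥ u s) (A *ᵥ u') t :=
  hasDerivAt_pi.2 fun i =>
    HasDerivAt.fun_sum fun j _ => (hasDerivAt_pi.1 hu j).const_mul (A i j)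

end Calculus

section DotProduct

variable {m n : Type*} [Fintype m] [Fintype n]

theorem dotProduct_self_nonneg (v : n → ℝ) : 0 ≤ v ⬝ᵥ v := by
  simpa using dotProduct_self_star_nonneg v

theorem two_mul_dotProduct_le (u v : n → ℝ) : 2 * (u ⬝ᵥ v) ≤ u ⬝ᵥ u + v ⬝ᵥ v := by
  have := dotProduct_self_nonneg (u - v)
  simp only [dotProduct_sub, sub_dotProduct, dotProduct_comm v u] at this
  linarith

theorem Matrix.mulVec_dotProduct_mulVec_self_le (A : Matrix m n ℝ) (v : n → ℝ) :
    A *ᵥ v ⬝ᵥ A *ᵥ v ≤ (∑ i, ∑ j, A i j ^ 2) * (v ⬝ᵥ v) := by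
  simp only [dotProduct, mulVec, ← sq]
  rw [Finset.sum_mul]
  exact Finset.sum_le_sum fun i _ => Finset.sum_mul_sq_le_sq_mul_sq _ (A i) v

theorem Matrix.IsSymm.dotProduct_mulVec_comm {A : Matrix n n ℝ} (hA : A.IsSymm) (u v : n → ℝ) :
    u ⬝ᵥ A *ᵥ v = v ⬝ᵥ A *ᵥ u := by
  rw [dotProduct_mulVec, ← mulVec_transpose, hA.eq, dotProduct_comm]

theorem tendsto_nhds_zero_of_tendsto_dotProduct_self {ι : Type*} {l : Filter ι} {u : ι → n → ℝ}
    (h : Tendsto (fun i => u i ⬝ᵥ u i) l (𝓝 0)) : Tendsto u l (𝓝 0) := by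
  refine tendsto_pi_nhds.2 fun k => squeeze_zero_norm (fun i => ?_)
    (by simpa using (Real.continuous_sqrt.tendsto 0).comp h)
  rw [Real.norm_eq_abs, ← Real.sqrt_sq_eq_abs]
  refine Real.sqrt_le_sqrt ?_
  simpa only [dotProduct, sq] using
    Finset.single_le_sum (fun j _ => mul_self_nonneg (u i j)) (Finset.mem_univ k)

end DotProduct

theorem tendsto_zero_of_hasDerivAt_le_neg {V V' f f' : ℝ → ℝ} {K : ℝ}
    (hV : ∀ t, HasDerivAt V (V' t) t) (hV' : ∀ t, V' t ≤ -f t) (hV_bdd : BddBelow (Set.range V))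
    (hf : ∀ t, HasDerivAt f (f' t) t) (hf' : ∀ᶠ t in atTop, -K ≤ f' t) (hf0 : ∀ t, 0 ≤ f t) :
    Tendsto f atTop (𝓝 0) := by
  have hV_lim : Tendsto V atTop (𝓝 (⨅ t, V t)) :=
    tendsto_atTop_ciInf (antitone_of_hasDerivAt_nonpos hV fun t => (hV' t).trans
      (neg_nonpos.2 (hf0 t))) hV_bdd
  refine tendsto_order.2 ⟨fun a ha => .of_forall fun t => ha.trans_le (hf0 t), fun ε hε => ?_⟩
  obtain ⟨δ, hδ, hKδ⟩ := exists_pos_mul_lt (half_pos hε) (max K 0)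
  have hV_drop : ∀ᶠ t in atTop, V t - V (t + δ) < ε / 2 * δ := by
    have := hV_lim.sub (hV_lim.comp (tendsto_atTop_add_const_right _ δ tendsto_id))
    rw [sub_self] at this
    exact this.eventually (gt_mem_nhds (by positivity))
  obtain ⟨T, hT⟩ := eventually_atTop.1 hf'
  filter_upwards [hV_drop, eventually_ge_atTop T] with t hV_drop_t hTt
  by_contra! hε_le
  have hf_lower : ∀ s ∈ Set.Icc t (t + δ), ε / 2 ≤ f s := by
    rintro s ⟨hts, hst⟩
    have hf_growth := (convex_Ici T).mul_sub_le_image_sub_of_le_deriv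
      (fun x _ => (hf x).continuousAt.continuousWithinAt)
      (fun x _ => (hf x).differentiableAt.differentiableWithinAt)
      (fun x hx => (hf x).deriv ▸
        (neg_le_neg (le_max_left K 0)).trans (hT x (interior_subset hx)))
      t hTt s (hTt.trans hts) hts
    have : max K 0 * (s - t) ≤ max K 0 * δ :=
      mul_le_mul_of_nonneg_left (by linarith) (le_max_right K 0)
    linarith
  have hV_growth := (convex_Icc t (t + δ)).image_sub_le_mul_sub_of_deriv_le
    (fun x _ => (hV x).continuousAt.continuousWithinAt)
    (fun x _ => (hV x).differentiableAt.differentiableWithinAt)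
    (fun x hx => (hV x).deriv ▸ (hV' x).trans (neg_le_neg (hf_lower x (interior_subset hx))))
    t ⟨le_rfl, by linarith⟩ (t + δ) ⟨by linarith, le_rfl⟩ (by linarith)
  linarith

section CoupledSystem

variable {n : Type*} [Fintype n] {L : Matrix n n ℝ}

theorem hasDerivAt_energy (hL : L.IsSymm) {u a : ℝ → n → ℝ} {t : ℝ}
    (hu : HasDerivAt u (-u t - L *ᵥ u t - L *ᵥ a t) t) (ha : HasDerivAt a (L *ᵥ u t) t) :
    HasDerivAt (fun s => 1 / 2 * (u s ⬝ᵥ u s) + 1 / 2 * (a s ⬝ᵥ a s))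
      (-(u t ⬝ᵥ u t) - u t ⬝ᵥ L *ᵥ u t) t := by
  refine (((hu.dotProduct hu).const_mul (1 / 2)).add
    ((ha.dotProduct ha).const_mul (1 / 2))).congr_deriv ?_
  rw [dotProduct_comm _ (u t), dotProduct_comm _ (a t), hL.dotProduct_mulVec_comm (a t)]
  simp only [dotProduct_sub, dotProduct_neg]
  ring

theorem exists_neg_le_two_mul_dotProduct_flow (L : Matrix n n ℝ) :
    ∃ C, 0 ≤ C ∧ ∀ u a : n → ℝ,
      -(C * (u ⬝ᵥ u + a ⬝ᵥ a)) ≤ 2 * (u ⬝ᵥ (-u - L *ᵥ u - L *ᵥ a)) := by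
  refine ⟨4 + ∑ i, ∑ j, L i j ^ 2, by positivity, fun u a => ?_⟩
  have h₁ := two_mul_dotProduct_le u (L *ᵥ u)
  have h₂ := two_mul_dotProduct_le u (L *ᵥ a)
  have h₃ := L.mulVec_dotProduct_mulVec_self_le u
  have h₄ := L.mulVec_dotProduct_mulVec_self_le a
  simp only [dotProduct_sub, dotProduct_neg]
  linarith [dotProduct_self_nonneg a]

end CoupledSystem

theorem stmt7_general (m : ℕ) (L : Matrix (Fin m) (Fin m) ℝ)
    (hsym : L.IsSymm) (hpsd : ∀ v : Fin m → ℝ, 0 ≤ v ⬝ᵥ L.mulVec v)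
    (w α w' α' : ℝ → Fin m → ℝ)
    (hw : ∀ t, HasDerivAt w (w' t) t)
    (hα : ∀ t, HasDerivAt α (α' t) t)
    (hodew : ∀ t, w' t = -(w t) - L.mulVec (w t) - L.mulVec (α t))
    (hodeα : ∀ t, α' t = L.mulVec (w t)) :
    (∀ t : ℝ,
        HasDerivAt (fun s => (1 / 2) * (w' s ⬝ᵥ w' s) + (1 / 2) * (α' s ⬝ᵥ α' s))
          (-(w' t ⬝ᵥ w' t) - w' t ⬝ᵥ L.mulVec (w' t)) t ∧
        -(w' t ⬝ᵥ w' t) - w' t ⬝ᵥ L.mulVec (w' t) ≤ 0) ∧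
      Tendsto w' atTop (nhds 0) := by
  have hw' : ∀ t, HasDerivAt w' (-w' t - L *ᵥ w' t - L *ᵥ α' t) t := fun t =>
    ((((hw t).neg.sub ((hw t).mulVec L)).sub ((hα t).mulVec L))).congr_of_eventuallyEq
      (.of_forall hodew)
  have hα' : ∀ t, HasDerivAt α' (L *ᵥ w' t) t := fun t =>
    ((hw t).mulVec L).congr_of_eventuallyEq (.of_forall hodeα)
  set V := fun s => 1 / 2 * (w' s ⬝ᵥ w' s) + 1 / 2 * (α' s ⬝ᵥ α' s)
  have hV : ∀ t, HasDerivAt V (-(w' t ⬝ᵥ w' t) - w' t ⬝ᵥ L *ᵥ w' t) t := fun t =>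
    hasDerivAt_energy hsym (hw' t) (hα' t)
  have hV_le : ∀ t, -(w' t ⬝ᵥ w' t) - w' t ⬝ᵥ L *ᵥ w' t ≤ -(w' t ⬝ᵥ w' t) := fun t => by
    linarith [hpsd (w' t)]
  have hV_nonpos : ∀ t, -(w' t ⬝ᵥ w' t) - w' t ⬝ᵥ L *ᵥ w' t ≤ 0 := fun t =>
    (hV_le t).trans (neg_nonpos.2 (dotProduct_self_nonneg _))
  refine ⟨fun t => ⟨hV t, hV_nonpos t⟩, ?_⟩
  have hV_nonneg : ∀ t, 0 ≤ V t := fun t => by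
    have := dotProduct_self_nonneg (w' t)
    have := dotProduct_self_nonneg (α' t)
    positivity
  obtain ⟨C, hC, hflow⟩ := exists_neg_le_two_mul_dotProduct_flow L
  refine tendsto_nhds_zero_of_tendsto_dotProduct_self <|
    tendsto_zero_of_hasDerivAt_le_neg (K := C * (2 * V 0)) hV hV_le
      ⟨0, Set.forall_mem_range.2 hV_nonneg⟩ (fun t => (hw' t).dotProduct (hw' t)) ?_
      fun t => dotProduct_self_nonneg _
  filter_upwards [eventually_ge_atTop 0] with t ht
  have hVt : V t ≤ V 0 := antitone_of_hasDerivAt_nonpos hV hV_nonpos ht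
  have hflow_t := hflow (w' t) (α' t)
  rw [show w' t ⬝ᵥ w' t + α' t ⬝ᵥ α' t = 2 * V t by ring] at hflow_t
  rw [dotProduct_comm _ (w' t)]
  linarith [mul_le_mul_of_nonneg_left hVt hC]

/-- For the coupled system `ẇ = −w − Lw − Lα`, `α̇ = Lw` with `L` symmetric PSD, the
Krasovskii function `V = ½‖ẇ‖² + ½‖α̇‖²` satisfies `V̇ = −‖ẇ‖² − ẇᵀLẇ ≤ 0`, and
`ẇ(t) → 0` as `t → ∞`. -/
theorem stmt7 (m : ℕ) (L : Matrix (Fin m) (Fin m) ℝ)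
    (hsym : L.IsSymm) (hpsd : ∀ v : Fin m → ℝ, 0 ≤ v ⬝ᵥ L.mulVec v)
    (w α w' α' w'' : ℝ → Fin m → ℝ)
    (hw : ∀ t, HasDerivAt w (w' t) t)
    (hα : ∀ t, HasDerivAt α (α' t) t)
    (hw' : ∀ t, HasDerivAt w' (w'' t) t)
    (hodew : ∀ t, w' t = -(w t) - L.mulVec (w t) - L.mulVec (α t))
    (hodeα : ∀ t, α' t = L.mulVec (w t)) :
    (∀ t : ℝ,
        HasDerivAt (fun s => (1 / 2) * (w' s ⬝ᵥ w' s) + (1 / 2) * (α' s ⬝ᵥ α' s))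
          (-(w' t ⬝ᵥ w' t) - w' t ⬝ᵥ L.mulVec (w' t)) t ∧
        -(w' t ⬝ᵥ w' t) - w' t ⬝ᵥ L.mulVec (w' t) ≤ 0) ∧
      Tendsto w' atTop (nhds 0) :=
  stmt7_general m L hsym hpsd w α w' α' hw hα hodew hodeα
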